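/- arXiv:2410.08802 — 4 statements merged into one kernel-verified Lean document; each statement's English description precedes it below -/
import Mathlib

section
/- For all nonnegative integers c, k and all m, the identity q_k^{(c)}(m) = ∑_{i=0}^{k} binom(2c+1, i) * p_{k-i}^{(c)}(m) holds, where p and q are the polynomials defined by p_j^{(c)}(m) = binom(m-c-1, j) * binom(m+c+j, j) and q_j^{(c)}(m) = binom(m+c, j) * binom(m-c-1+j, j). -/
/-!
Put `a = m - c - 1` and `n = 2c + 1`; the claim becomes
`binom(a+n,k) binom(a+k,k) = ∑ᵢ C(n,i) binom(a,k-i) binom(a+n+k-i,k-i)`, which holds in every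
binomial ring. Expand `binom(a+n,k)` by Vandermonde and trade
`binom(a,k-j) binom(a+k,k) = binom(a+j,k) binom(a+k,k-j)` (both are the same trinomial coefficient
of `a+k`); a second Vandermonde gives the double sum
`∑_{i ≤ j} C(n,j) C(j,i) binom(a,k-i) binom(a+k,k-j)`. Summing over `j` first, with
`C(n,j) C(j,i) = C(n,i) C(n-i,j-i)`, a third Vandermonde yields the right-hand side.
-/

/-- Binomial coefficient with arbitrary (rational) upper argument:
`binom(x,k) = x(x-1)...(x-k+1)/k!`. -/
noncomputable def qbinom (x : ℚ) (k : ℕ) : ℚ :=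
  (∏ i ∈ Finset.range k, (x - i)) / (Nat.factorial k)

/-- `p_j^{(c)}(m) = binom(m-c-1, j) * binom(m+c+j, j)`. -/
noncomputable def pP (c j : ℕ) (m : ℚ) : ℚ :=
  qbinom (m - c - 1) j * qbinom (m + c + j) j

/-- `q_j^{(c)}(m) = binom(m+c, j) * binom(m-c-1+j, j)`. -/
noncomputable def qP (c j : ℕ) (m : ℚ) : ℚ :=
  qbinom (m + c) j * qbinom (m - c - 1 + j) j

open Finset Polynomial

namespace Ring

variable {R : Type*} [CommRing R] [BinomialRing R]

theorem choose_add_natCast_eq_sum_range (a : R) (n k : ℕ) :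
    choose (a + n) k = ∑ i ∈ range (k + 1), (n.choose i : R) * choose a (k - i) := by
  rw [add_comm, add_choose_eq k (Nat.cast_commute n a),
    Nat.sum_antidiagonal_eq_sum_range_succ (fun i j => choose (n : R) i * choose a j)]
  simp only [choose_natCast]

theorem choose_sub_mul_choose_comm (b : R) (k l : ℕ) :
    choose (b - k) l * choose b k = choose (b - l) k * choose b l := by
  have hk := choose_smul_choose b (Nat.le_add_right k l)
  have hl := choose_smul_choose b (Nat.le_add_left l k)
  rw [Nat.add_sub_cancel_left, Nat.choose_symm_add] at hk
  rw [Nat.add_sub_cancel, hk] at hl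
  rw [mul_comm, hl, mul_comm]

theorem sum_choose_mul_choose_mul_choose (b : R) (n k i : ℕ) (hik : i ≤ k) :
    ∑ j ∈ range (k + 1), (n.choose j * j.choose i : R) * choose b (k - j) =
      n.choose i * choose (b + (n - i : ℕ)) (k - i) := by
  rw [choose_add_natCast_eq_sum_range, mul_sum, range_eq_Ico,
    ← sum_Ico_consecutive _ (Nat.zero_le i) (by omega : i ≤ k + 1),
    sum_eq_zero fun j hj => by simp [Nat.choose_eq_zero_of_lt (mem_Ico.mp hj).2],
    zero_add, sum_Ico_eq_sum_range, Nat.sub_add_comm hik]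
  refine sum_congr rfl fun l _ => ?_
  rw [← mul_assoc, Nat.sub_sub, ← Nat.cast_mul, ← Nat.cast_mul,
    Nat.choose_mul (Nat.le_add_right i l), Nat.add_sub_cancel_left]

theorem choose_add_natCast_mul_choose_add (a : R) (n k : ℕ) :
    choose (a + n) k * choose (a + k) k = ∑ i ∈ range (k + 1),
      (n.choose i : R) * (choose a (k - i) * choose (a + n + (k - i : ℕ)) (k - i)) := by
  calc choose (a + n) k * choose (a + k) k
      = ∑ j ∈ range (k + 1), (n.choose j : R) * choose (a + j) k * choose (a + k) (k - j) := by
        rw [choose_add_natCast_eq_sum_range, sum_mul]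
        refine sum_congr rfl fun j hj => ?_
        have hswap := choose_sub_mul_choose_comm (a + k) k (k - j)
        rw [add_sub_cancel_right, Nat.cast_sub (mem_range_succ_iff.mp hj),
          show a + k - (k - j) = a + j by ring] at hswap
        rw [mul_assoc, hswap, mul_assoc]
    _ = ∑ j ∈ range (k + 1), ∑ i ∈ range (k + 1),
          (n.choose j * j.choose i : R) * choose (a + k) (k - j) * choose a (k - i) := by
        refine sum_congr rfl fun j _ => ?_
        rw [choose_add_natCast_eq_sum_range a j k, mul_sum, sum_mul]
        exact sum_congr rfl fun i _ => by ring
    _ = _ := by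
        rw [sum_comm]
        refine sum_congr rfl fun i hi => ?_
        have hik := mem_range_succ_iff.mp hi
        rw [← sum_mul, sum_choose_mul_choose_mul_choose _ _ _ _ hik]
        rcases le_or_gt i n with hin | hni
        · rw [show a + k + ((n - i : ℕ) : R) = a + n + (k - i : ℕ) by
            push_cast [Nat.cast_sub hin, Nat.cast_sub hik]; ring]
          ring
        · simp [Nat.choose_eq_zero_of_lt hni]

end Ring

theorem qbinom_eq_choose (x : ℚ) (k : ℕ) : qbinom x k = Ring.choose x k := by
  rw [Ring.choose_eq_smul, ← aeval_eq_smeval, aeval_def, eval₂_eq_eval_map, descPochhammer_map,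
    descPochhammer_eval_eq_prod_range, qbinom, smul_eq_mul, div_eq_inv_mul]

theorem stmt2 (c k : ℕ) (m : ℚ) :
    qP c k m = ∑ i ∈ Finset.range (k + 1),
      (Nat.choose (2 * c + 1) i : ℚ) * pP c (k - i) m := by
  have hshift : m - c - 1 + ((2 * c + 1 : ℕ) : ℚ) = m + c := by push_cast; ring
  have key := Ring.choose_add_natCast_mul_choose_add (m - c - 1) (2 * c + 1) k
  rw [hshift] at key
  simpa only [qP, pP, qbinom_eq_choose] using key
end

section
/- Define p_k^{(c)}(m1, m2) := ∑_{k1+k2=k} p_{k1}^{(c)}(m1) * q_{k2}^{(c)}(m2), where p_j^{(c)}(m) = binom(m-c-1, j)*binom(m+c+j, j) and q_j^{(c)}(m) = binom(m+c, j)*binom(m-c-1+j, j). Then p_k^{(c)}(m1, m2) is symmetric in m1 and m2, i.e., p_k^{(c)}(m1, m2) = p_k^{(c)}(m2, m1), and moreover p_k^{(c)}(m1, m2) = ∑_{k1+k2+i=k} binom(2c+1, i) * p_{k1}^{(c)}(m1) * p_{k2}^{(c)}(m2). -/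
/-- `p_k^{(c)}(m1, m2) = ∑_{k1+k2=k} p_{k1}^{(c)}(m1) q_{k2}^{(c)}(m2)`. -/
noncomputable def pP2 (c k : ℕ) (m1 m2 : ℚ) : ℚ :=
  ∑ kk ∈ Finset.HasAntidiagonal.antidiagonal k, pP c kk.1 m1 * qP c kk.2 m2

/-!
With `P_m(t) = ∑ p_j(m) tʲ`, the key fact is `∑ q_j(m) tʲ = (1 + t)^(2c+1) P_m(t)`; then
`∑ p_k(m1, m2) tᵏ = (1 + t)^(2c+1) P_{m1}(t) P_{m2}(t)`, which is symmetric in `m1, m2`.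
Coefficientwise (with `a = 2c+1`, `x = m-c-1`) it is the identity
`∑_{i+l=j} C(a,i) C(x,l) C(x+a+l,l) = C(x+a,j) C(x+j,j)`, valid for all rational `a` and `x` and
proved by checking that both sides satisfy the same first-order recurrence in `j`.
-/

open Finset PowerSeries

@[simp]
lemma qbinom_zero (x : ℚ) : qbinom x 0 = 1 := by simp [qbinom]

lemma succ_mul_qbinom_succ (x : ℚ) (k : ℕ) :
    (k + 1 : ℚ) * qbinom x (k + 1) = (x - k) * qbinom x k := by
  rw [qbinom, qbinom, prod_range_succ, Nat.factorial_succ]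
  push_cast
  field_simp

lemma succ_mul_qbinom_add_one_succ (x : ℚ) (k : ℕ) :
    (k + 1 : ℚ) * qbinom (x + 1) (k + 1) = (x + 1) * qbinom x k := by
  rw [qbinom, qbinom, prod_range_succ', Nat.factorial_succ]
  push_cast
  simp only [add_sub_add_right_eq_sub, sub_zero]
  field_simp

lemma qbinom_natCast (n k : ℕ) : qbinom n k = n.choose k := by
  rw [qbinom, Nat.cast_choose_eq_descPochhammer_div, descPochhammer_eval_eq_prod_range]

noncomputable def binomTriple (a x : ℚ) (p : ℕ × ℕ) : ℚ :=
  qbinom a p.1 * qbinom x p.2 * qbinom (x + a + p.2) p.2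

lemma binomTriple_recurrence (a x : ℚ) (i l : ℕ) :
    (x + a - (i + l)) * (x + (i + l) + 1) * binomTriple a x (i, l) =
      ((l : ℚ) + 1) ^ 2 * binomTriple a x (i, l + 1) +
        ((i : ℚ) + 1) * ((i : ℚ) + 1 + 2 * l) * binomTriple a x (i + 1, l) := by
  have ha := succ_mul_qbinom_succ a i
  have hx := succ_mul_qbinom_succ x l
  have hy := succ_mul_qbinom_add_one_succ (x + a + l) l
  simp only [binomTriple, Nat.cast_add, Nat.cast_one, ← add_assoc] at *
  linear_combination
    (-((l : ℚ) + 1) * qbinom a i * qbinom (x + a + l + 1) (l + 1)) * hx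
    - ((x - l) * qbinom a i * qbinom x l) * hy
    - (((i : ℚ) + 1 + 2 * l) * qbinom x l * qbinom (x + a + l) l) * ha

lemma sum_binomTriple_recurrence (a x : ℚ) (j : ℕ) :
    ((j : ℚ) + 1) ^ 2 * ∑ p ∈ antidiagonal (j + 1), binomTriple a x p =
      (x + a - j) * (x + j + 1) * ∑ p ∈ antidiagonal j, binomTriple a x p := by
  calc ((j : ℚ) + 1) ^ 2 * ∑ p ∈ antidiagonal (j + 1), binomTriple a x p
      = ∑ p ∈ antidiagonal (j + 1), (p.2 : ℚ) ^ 2 * binomTriple a x p +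
          ∑ p ∈ antidiagonal (j + 1), (p.1 : ℚ) * (p.1 + 2 * p.2) * binomTriple a x p := by
        rw [mul_sum, ← sum_add_distrib]
        refine sum_congr rfl fun p hp => ?_
        have hj : (p.1 : ℚ) + p.2 = j + 1 := by exact_mod_cast mem_antidiagonal.mp hp
        rw [← hj]
        ring
    _ = ∑ p ∈ antidiagonal j, ((p.2 : ℚ) + 1) ^ 2 * binomTriple a x (p.1, p.2 + 1) +
          ∑ p ∈ antidiagonal j,
            ((p.1 : ℚ) + 1) * ((p.1 : ℚ) + 1 + 2 * p.2) * binomTriple a x (p.1 + 1, p.2) := by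
        rw [Nat.sum_antidiagonal_succ', Nat.sum_antidiagonal_succ]
        push_cast
        ring
    _ = (x + a - j) * (x + j + 1) * ∑ p ∈ antidiagonal j, binomTriple a x p := by
        rw [← sum_add_distrib, mul_sum]
        refine sum_congr rfl fun p hp => ?_
        have hj : (p.1 : ℚ) + p.2 = j := by exact_mod_cast mem_antidiagonal.mp hp
        rw [← hj, binomTriple_recurrence]

theorem sum_antidiagonal_binomTriple (a x : ℚ) (j : ℕ) :
    ∑ p ∈ antidiagonal j, binomTriple a x p = qbinom (x + a) j * qbinom (x + j) j := by
  induction j with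
  | zero => simp [binomTriple]
  | succ j ih =>
    have hrhs : ((j : ℚ) + 1) ^ 2 * (qbinom (x + a) (j + 1) * qbinom (x + (j + 1 : ℕ)) (j + 1)) =
        (x + a - j) * (x + j + 1) * (qbinom (x + a) j * qbinom (x + j) j) := by
      have h₁ := succ_mul_qbinom_succ (x + a) j
      have h₂ := succ_mul_qbinom_add_one_succ (x + j) j
      push_cast
      rw [← add_assoc]
      linear_combination ((j : ℚ) + 1) * qbinom (x + j + 1) (j + 1) * h₁ +
        (x + a - j) * qbinom (x + a) j * h₂
    refine mul_left_cancel₀ (by positivity : ((j : ℚ) + 1) ^ 2 ≠ 0) ?_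
    rw [sum_binomTriple_recurrence, ih, hrhs]

lemma qP_eq_sum_choose_mul_pP (c j : ℕ) (m : ℚ) :
    qP c j m = ∑ p ∈ antidiagonal j, ((2 * c + 1).choose p.1 : ℚ) * pP c p.2 m := by
  have h := sum_antidiagonal_binomTriple (2 * c + 1 : ℕ) (m - c - 1) j
  have hx : m - c - 1 + ((2 * c + 1 : ℕ) : ℚ) = m + c := by push_cast; ring
  rw [hx] at h
  rw [qP, ← h]
  refine sum_congr rfl fun p _ => ?_
  rw [binomTriple, pP, hx, qbinom_natCast, mul_assoc]

noncomputable def pSeries (c : ℕ) (m : ℚ) : ℚ⟦X⟧ := mk fun j => pP c j m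

noncomputable def chooseSeries (n : ℕ) : ℚ⟦X⟧ := mk fun i => (n.choose i : ℚ)

lemma pP2_eq_coeff (c k : ℕ) (m1 m2 : ℚ) :
    pP2 c k m1 m2 = coeff k (chooseSeries (2 * c + 1) * (pSeries c m1 * pSeries c m2)) := by
  have hq : mk (fun j => qP c j m2) = chooseSeries (2 * c + 1) * pSeries c m2 := by
    ext j
    simp [coeff_mul, chooseSeries, pSeries, qP_eq_sum_choose_mul_pP]
  rw [mul_left_comm, ← hq, coeff_mul, pP2]
  simp [pSeries]

theorem stmt4 (c k : ℕ) (m1 m2 : ℚ) :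
    pP2 c k m1 m2 = pP2 c k m2 m1 ∧
    pP2 c k m1 m2 =
      ∑ x ∈ Finset.HasAntidiagonal.antidiagonal k, ∑ y ∈ Finset.HasAntidiagonal.antidiagonal x.2,
        (Nat.choose (2 * c + 1) x.1 : ℚ) * pP c y.1 m1 * pP c y.2 m2 := by
  refine ⟨by rw [pP2_eq_coeff, pP2_eq_coeff, mul_comm (pSeries c m1)], ?_⟩
  simp [pP2_eq_coeff, coeff_mul, chooseSeries, pSeries, mul_sum, mul_assoc]
end

section
/- For b ≥ 1 and n ≥ 1, α_{n-1,n}^{(b)} = ((n+1)/2) * b * (b-1), where α_{k,n}^{(b)} := [u^{n-k}] (u/h_b(u))^{n+1} and h_b(u) = ∑_{j=1}^{b} ((-1)^{j-1}/b) binom(b,j) binom(b,j-1) u^j. -/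
open PowerSeries

/-- The power series `h_b(u)/u = ∑_{i=0}^{b-1} ((-1)^i/b) binom(b,i+1) binom(b,i) u^i`,
where `h_b(u) = ∑_{j=1}^{b} ((-1)^{j-1}/b) binom(b,j) binom(b,j-1) u^j`. For `b ≥ 1` it has
constant term `1`, so that `u/h_b(u) = (hDivU b)⁻¹` is a well-defined formal power series. -/
noncomputable def hDivU (b : ℕ) : PowerSeries ℚ :=
  ∑ i ∈ Finset.range b,
    PowerSeries.C ((-1 : ℚ) ^ i / b * (Nat.choose b (i + 1)) * (Nat.choose b i)) *
      PowerSeries.X ^ i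

/-- Coefficient extraction `[u^d] F` for an integer index `d`, with the convention that
`[u^d] F = 0` for `d < 0`. -/
noncomputable def coeffZ (d : ℤ) (F : PowerSeries ℚ) : ℚ :=
  if 0 ≤ d then PowerSeries.coeff d.toNat F else 0

/-- `α_{k,n}^{(b)} = [u^{n-k}] (u/h_b(u))^{n+1}`. -/
noncomputable def alphaC (b k n : ℕ) : ℚ :=
  coeffZ ((n : ℤ) - (k : ℤ)) ((hDivU b)⁻¹ ^ (n + 1))

/-! Only linear coefficients matter: `h_b(u)/u = 1 - binom(b,2) u + O(u²)`, hence
`(u/h_b(u))^(n+1) = 1 + (n+1) binom(b,2) u + O(u²)`. -/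

open Finset

theorem PowerSeries.coeff_one_inv {k : Type*} [Field k] (φ : k⟦X⟧) :
    coeff 1 φ⁻¹ = -coeff 1 φ * (constantCoeff φ)⁻¹ ^ 2 := by
  rw [coeff_inv, if_neg one_ne_zero, show antidiagonal 1 = {(0, 1), (1, 0)} from rfl,
    sum_pair (by simp)]
  simp only [if_neg (lt_irrefl 1), if_pos one_pos, coeff_zero_eq_constantCoeff, constantCoeff_inv]
  ring

theorem coeff_hDivU (b i : ℕ) :
    coeff i (hDivU b) = (-1 : ℚ) ^ i / b * (b.choose (i + 1)) * (b.choose i) := by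
  simp only [hDivU, map_sum, coeff_C_mul, coeff_X_pow, mul_ite, mul_one, mul_zero,
    sum_ite_eq, mem_range]
  split_ifs with hi
  · rfl
  · rw [Nat.choose_eq_zero_of_lt (by omega : b < i + 1)]
    simp

theorem constantCoeff_hDivU {b : ℕ} (hb : b ≠ 0) : constantCoeff (hDivU b) = 1 := by
  rw [← coeff_zero_eq_constantCoeff_apply, coeff_hDivU]
  simp [hb]

theorem coeff_one_hDivU (b : ℕ) : coeff 1 (hDivU b) = -(b.choose 2 : ℚ) := by
  rcases eq_or_ne b 0 with rfl | hb
  · simp [hDivU]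
  rw [coeff_hDivU, Nat.choose_one_right]
  field_simp

theorem alphaC_of_le {b k n : ℕ} (hk : k ≤ n) :
    alphaC b k n = coeff (n - k) ((hDivU b)⁻¹ ^ (n + 1)) := by
  rw [alphaC, coeffZ, if_pos (by omega)]
  congr
  omega

theorem stmt11 (b n : ℕ) (hb : 1 ≤ b) (hn : 1 ≤ n) :
    alphaC b (n - 1) n = ((n : ℚ) + 1) / 2 * b * ((b : ℚ) - 1) := by
  rw [alphaC_of_le (Nat.sub_le n 1), Nat.sub_sub_self hn, coeff_one_pow, coeff_one_inv,
    constantCoeff_inv, constantCoeff_hDivU (by omega), coeff_one_hDivU, Nat.cast_choose_two]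
  push_cast
  ring
end

section
/- Let U(t) be the formal power series in t (over the ring of formal power series in another variable, or with a parameter v with zero constant term) satisfying t = U(t) / ((1 - U(t)) (U(t) + v)). Then for every p ≥ 1, the coefficient of t^p in U(t) equals h_p(v), where h_p(u) = ∑_{j=1}^{p} ((-1)^{j-1}/p) binom(p,j) binom(p,j-1) u^j. -/
/-!
Clearing denominators, `U` is the root with `U(0) = 0` of the quadratic
`t U² + b U - v t = 0`, `b = 1 - (1 - v) t`, whose discriminant is
`D = 1 - 2 (1 - v) t + (1 + v)² t²`. Differentiating the quadratic and eliminating `U²` gives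
the linear differential equation `t D U' + b U = 2 v t`, i.e. the three-term recurrence
`(n + 3) u_{n+2} = (2n + 3)(1 - v) u_{n+1} - n (1 + v)² u_n` for `u_n = [t^n] U`.
The polynomials `p h_p` satisfy the corresponding recurrence for `p u_p`, by Pascal's rule and the
absorption identity for binomial coefficients, and both sequences start with `0, v`.
-/

theorem Nat.cast_choose_succ_mul {R : Type*} [Ring R] (n k : ℕ) :
    (n.choose (k + 1) : R) * (k + 1) = n.choose k * (n - k) := by
  rcases le_or_gt k n with h | h
  · have := congrArg (Nat.cast : ℕ → R) (Nat.choose_succ_right_eq n k)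
    push_cast [Nat.cast_sub h] at this
    exact this
  · simp [Nat.choose_eq_zero_of_lt h, Nat.choose_eq_zero_of_lt (Nat.lt_succ_of_lt h)]

namespace PowerSeries

variable {R : Type*} [CommRing R] {U : R⟦X⟧} {v : R}

theorem coeff_X_mul_derivative (f : R⟦X⟧) (n : ℕ) :
    coeff n (X * d⁄dX R f) = n * coeff n f := by
  cases n with
  | zero => simp
  | succ n => rw [coeff_succ_X_mul, coeff_derivative, mul_comm]; push_cast; rfl

theorem linear_ode_of_eq_X_mul (hU : U = X * (1 - U) * (U + C v)) :
    X * (1 - 2 * (1 - C v) * X + (1 + C v) ^ 2 * X ^ 2) * d⁄dX R U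
      + (1 - (1 - C v) * X) * U = 2 * C v * X := by
  have hQ : X * U ^ 2 + (1 - (1 - C v) * X) * U - C v * X = 0 := by linear_combination hU
  have hQ' := congrArg (d⁄dX R) hQ
  simp only [Derivation.leibniz, Derivation.leibniz_pow, map_add, map_sub, derivative_X,
    derivative_C, derivative_one, smul_eq_mul, map_zero] at hQ'
  linear_combination (1 + X - C v * X - 2 * X * U - 4 * X ^ 2 * d⁄dX R U) * hQ
    + X * (2 * X * U + 1 - X + C v * X) * hQ'

theorem coeff_recurrence_of_eq_X_mul (hU : U = X * (1 - U) * (U + C v)) (n : ℕ) :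
    (n + 3 : R) * coeff (n + 2) U
      = (2 * n + 3) * (1 - v) * coeff (n + 1) U - n * (1 + v) ^ 2 * coeff n U := by
  have hode : X * d⁄dX R U - (2 * (1 - v)) • (X * (X * d⁄dX R U))
      + ((1 + v) ^ 2) • (X * (X * (X * d⁄dX R U))) + U - (1 - v) • (X * U)
      = (2 * v) • X := by
    simp only [smul_eq_C_mul, map_mul, map_sub, map_add, map_pow, map_one, map_ofNat]
    linear_combination linear_ode_of_eq_X_mul hU
  have hcoeff := congrArg (coeff (n + 2)) hode
  simp only [map_add, map_sub, coeff_smul, coeff_succ_X_mul, coeff_derivative,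
    coeff_X_mul_derivative, coeff_X, if_neg (show n + 2 ≠ 1 by omega)] at hcoeff
  push_cast at hcoeff
  linear_combination hcoeff

theorem coeff_one_of_eq_X_mul (h0 : constantCoeff U = 0) (hU : U = X * (1 - U) * (U + C v)) :
    coeff 1 U = v := by
  rw [hU, mul_assoc, coeff_succ_X_mul, coeff_zero_eq_constantCoeff]
  simp [h0]

end PowerSeries

section Narayana

open Polynomial

def scaledNarayanaCoeff (p : ℕ) : ℕ → ℚ
  | 0 => 0
  | j + 1 => (-1) ^ j * p.choose (j + 1) * p.choose j

/-- The polynomial `p h_p`. -/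
noncomputable def scaledNarayana (p : ℕ) : ℚ[X] :=
  ∑ j ∈ Finset.Icc 1 p, C ((-1 : ℚ) ^ (j - 1) * p.choose j * p.choose (j - 1)) * X ^ j

theorem coeff_scaledNarayana (p m : ℕ) :
    (scaledNarayana p).coeff m = scaledNarayanaCoeff p m := by
  simp only [scaledNarayana, finsetSum_coeff, coeff_C_mul_X_pow]
  rw [Finset.sum_ite_eq]
  cases m with
  | zero => simp [scaledNarayanaCoeff]
  | succ j =>
    rcases le_or_gt (j + 1) p with h | h
    · simp [scaledNarayanaCoeff, h]
    · simp [scaledNarayanaCoeff, Nat.choose_eq_zero_of_lt h]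

theorem scaledNarayanaCoeff_recurrence (q m : ℕ) :
    ((q : ℚ) + 1) * (q + 3) * scaledNarayanaCoeff (q + 2) (m + 2)
      = ((q : ℚ) + 2) * (2 * q + 3)
          * (scaledNarayanaCoeff (q + 1) (m + 2) - scaledNarayanaCoeff (q + 1) (m + 1))
        - ((q : ℚ) + 2) * (q + 1)
          * (scaledNarayanaCoeff q (m + 2) + 2 * scaledNarayanaCoeff q (m + 1)
            + scaledNarayanaCoeff q m) := by
  cases m with
  | zero =>
    simp only [scaledNarayanaCoeff, Nat.reduceAdd, Nat.cast_choose_two, Nat.choose_one_right,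
      Nat.choose_zero_right]
    push_cast
    ring
  | succ r =>
    have pascal (n k : ℕ) : ((n + 1).choose (k + 1) : ℚ) = n.choose k + n.choose (k + 1) := by
      rw [Nat.choose_succ_succ]; push_cast; ring
    simp only [scaledNarayanaCoeff, pascal (q + 1) (r + 2), pascal (q + 1) (r + 1),
      pascal q (r + 2), pascal q (r + 1), pascal q r]
    have a1 := Nat.cast_choose_succ_mul (R := ℚ) q r
    have a2 := Nat.cast_choose_succ_mul (R := ℚ) q (r + 1)
    have a3 := Nat.cast_choose_succ_mul (R := ℚ) q (r + 2)
    push_cast at a1 a2 a3 ⊢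
    -- After Pascal's rule only the four consecutive binomials `w, x, y, z` remain, tied by the
    -- three absorption relations `a1, a2, a3`.
    set w := (q.choose r : ℚ)
    set x := (q.choose (r + 1) : ℚ)
    set y := (q.choose (r + 2) : ℚ)
    set z := (q.choose (r + 3) : ℚ)
    set n : ℚ := (r : ℚ) + 2
    linear_combination
      ((-1 : ℚ) ^ r * (x - 2 * z - n * y - n * z - q * z)) * a1
      + ((-1 : ℚ) ^ r * (-w - x + y - n * y - n * z + q * y)) * a2
      + ((-1 : ℚ) ^ r * (-w - 2 * x - y + n * w + 2 * n * x + n * y)) * a3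

theorem scaledNarayana_recurrence (q : ℕ) :
    C (((q : ℚ) + 1) * (q + 3)) * scaledNarayana (q + 2)
      = C (((q : ℚ) + 2) * (2 * q + 3)) * ((1 - X) * scaledNarayana (q + 1))
        - C (((q : ℚ) + 2) * (q + 1)) * ((1 + X) ^ 2 * scaledNarayana q) := by
  have hsq : (1 + X) ^ 2 * scaledNarayana q
      = scaledNarayana q + 2 * (X * scaledNarayana q) + X * (X * scaledNarayana q) := by ring
  rw [hsq, sub_mul, one_mul]
  ext m
  simp only [coeff_sub, coeff_add, coeff_C_mul, coeff_ofNat_mul, coeff_scaledNarayana]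
  rcases m with _ | _ | m
  · simp [scaledNarayanaCoeff]
  · simp only [coeff_X_mul_zero, coeff_X_mul, coeff_scaledNarayana, scaledNarayanaCoeff, zero_add,
      Nat.choose_one_right, Nat.choose_zero_right]
    push_cast
    ring
  · simp only [coeff_X_mul, coeff_scaledNarayana]
    exact scaledNarayanaCoeff_recurrence q m

theorem natCast_mul_coeff_eq_scaledNarayana {U : PowerSeries ℚ[X]}
    (h0 : PowerSeries.constantCoeff U = 0)
    (hU : U = PowerSeries.X * (1 - U) * (U + PowerSeries.C X)) (n : ℕ) :
    (n : ℚ[X]) * PowerSeries.coeff n U = scaledNarayana n := by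
  induction n using Nat.strong_induction_on with
  | _ n ih =>
  rcases n with _ | _ | q
  · simp [scaledNarayana]
  · simp [scaledNarayana, PowerSeries.coeff_one_of_eq_X_mul h0 hU]
  · have hU_rec := PowerSeries.coeff_recurrence_of_eq_X_mul hU q
    have hK_rec := scaledNarayana_recurrence q
    simp only [map_mul, map_add, map_natCast, map_ofNat, map_one] at hK_rec
    have hU_prev : ((q : ℚ[X]) + 1) * PowerSeries.coeff (q + 1) U = scaledNarayana (q + 1) := by
      exact_mod_cast ih (q + 1) (by omega)
    have hne : ((q : ℚ[X]) + 1) * (q + 3) ≠ 0 := by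
      exact_mod_cast (show (q + 1) * (q + 3) ≠ 0 by positivity)
    refine mul_left_cancel₀ hne ?_
    push_cast
    linear_combination ((q : ℚ[X]) + 1) * (q + 2) * hU_rec - hK_rec
      + ((q : ℚ[X]) + 2) * (2 * q + 3) * (1 - X) * hU_prev
      - ((q : ℚ[X]) + 2) * (q + 1) * (1 + X) ^ 2 * ih q (by omega)

theorem sum_Icc_eq_C_inv_mul_scaledNarayana (p : ℕ) :
    ∑ j ∈ Finset.Icc 1 p,
        C ((-1 : ℚ) ^ (j - 1) / p * (Nat.choose p j) * (Nat.choose p (j - 1))) * X ^ j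
      = C (p : ℚ)⁻¹ * scaledNarayana p := by
  rw [scaledNarayana, Finset.mul_sum]
  refine Finset.sum_congr rfl fun j _ => ?_
  rw [← mul_assoc, ← C_mul]
  ring_nf

end Narayana

/-- Let `U(t)` be a formal power series in `t` over `ℚ[v]` with zero constant term,
satisfying `t = U(t) / ((1 - U(t)) (U(t) + v))`, i.e. `U = t (1 - U) (U + v)`.
Then `[t^p] U(t) = h_p(v) = ∑_{j=1}^{p} ((-1)^{j-1}/p) binom(p,j) binom(p,j-1) v^j`
for every `p ≥ 1`. -/
theorem stmt15 (U : PowerSeries (Polynomial ℚ))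
    (h0 : PowerSeries.constantCoeff U = 0)
    (hU : U = PowerSeries.X * (1 - U) * (U + PowerSeries.C (Polynomial.X : Polynomial ℚ))) :
    ∀ p : ℕ, 1 ≤ p →
      PowerSeries.coeff p U =
        ∑ j ∈ Finset.Icc 1 p,
          Polynomial.C ((-1 : ℚ) ^ (j - 1) / p * (Nat.choose p j) * (Nat.choose p (j - 1))) *
            Polynomial.X ^ j := by
  intro p hp
  have hp0 : (p : ℚ) ≠ 0 := by exact_mod_cast (show p ≠ 0 by omega)
  rw [sum_Icc_eq_C_inv_mul_scaledNarayana, ← natCast_mul_coeff_eq_scaledNarayana h0 hU,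
    ← map_natCast Polynomial.C, ← mul_assoc, ← Polynomial.C_mul, inv_mul_cancel₀ hp0,
    Polynomial.C_1, one_mul]
end
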